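/- arXiv:1706.05532 — 2 statements merged into one kernel-verified Lean document; each statement's English description precedes it below -/
import Mathlib

section
/- The operator W^{xy} = (d_O/2)(ω^{x₁} ⊗ ρ_∼^{x₂y₁} ⊗ ω^{y₂} + ω^{x₂} ⊗ ρ_∼^{x₁y₂} ⊗ ω^{y₁}) on two parties X and Y with all four systems x₁, x₂, y₁, y₂ being qubits — where d_O = 4, ω = 𝟙/2 is the maximally mixed qubit state, and ρ_∼ = (𝟙⊗𝟙 + σ₃⊗σ₃)/4 — is a valid process: it is positive semidefinite, has trace d_O = 4, and every nonzero nontrivial term in its Hilbert–Schmidt (Pauli) expansion is in type on at least one party. -/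
open Matrix Kronecker BigOperators
open scoped ComplexOrder

namespace ProcessPaper

/-- A (generalized) Hilbert–Schmidt basis of operators on a finite-dimensional Hilbert
space with orthonormal basis indexed by `n`: a family of Hermitian matrices indexed by
`ι` (with `Fintype.card ι = (Fintype.card n) ^ 2`), whose distinguished element `σ 0`
is the identity, whose other elements are traceless, which are mutually orthogonal
under the trace inner product, and which are all nonzero. -/
def IsHSBasis {n : Type*} [Fintype n] [DecidableEq n] {ι : Type*} [Fintype ι] [Zero ι]
    (σ : ι → Matrix n n ℂ) : Prop :=
  Fintype.card ι = (Fintype.card n) ^ 2 ∧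
  (∀ i, (σ i).IsHermitian) ∧
  σ 0 = 1 ∧
  (∀ i, i ≠ 0 → (σ i).trace = 0) ∧
  (∀ i j, i ≠ j → (σ i * σ j).trace = 0) ∧
  (∀ i, σ i ≠ 0)

variable {P : Type*} [Fintype P] [DecidableEq P]

section defs

variable {I O : P → Type*} [∀ p, Fintype (I p)] [∀ p, DecidableEq (I p)]
  [∀ p, Fintype (O p)] [∀ p, DecidableEq (O p)]
  {ιI ιO : P → Type*} [∀ p, Fintype (ιI p)] [∀ p, Zero (ιI p)]
  [∀ p, Fintype (ιO p)] [∀ p, Zero (ιO p)]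

/-- The tensor product, over all parties, of party-local operators
(each party `p` carries the Hilbert space of its input system `I p`
tensored with its output system `O p`). -/
def tensorFamily (M : ∀ p, Matrix (I p × O p) (I p × O p) ℂ) :
    Matrix ((p : P) → I p × O p) ((p : P) → I p × O p) ℂ :=
  fun x y => ∏ p, M p (x p) (y p)

/-- The Hilbert–Schmidt basis term with multi-index `t`:
`⨂_p σI p (t p).1 ⊗ σO p (t p).2`. -/
def hsTerm (σI : ∀ p, ιI p → Matrix (I p) (I p) ℂ)
    (σO : ∀ p, ιO p → Matrix (O p) (O p) ℂ)
    (t : ∀ p, ιI p × ιO p) :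
    Matrix ((p : P) → I p × O p) ((p : P) → I p × O p) ℂ :=
  fun x y => ∏ p, σI p (t p).1 (x p).1 (y p).1 * σO p (t p).2 (x p).2 (y p).2

/-- The operator with Hilbert–Schmidt coefficients `w`. -/
noncomputable def expand (σI : ∀ p, ιI p → Matrix (I p) (I p) ℂ)
    (σO : ∀ p, ιO p → Matrix (O p) (O p) ℂ)
    (w : (∀ p, ιI p × ιO p) → ℝ) :
    Matrix ((p : P) → I p × O p) ((p : P) → I p × O p) ℂ :=
  ∑ t : ∀ p, ιI p × ιO p, (w t : ℂ) • hsTerm σI σO t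

end defs

section types

variable {ιI ιO : P → Type*} [∀ p, Zero (ιI p)] [∀ p, Zero (ιO p)]

/-- A term is trivial on party `p` if its indices on both the input and the output
system of `p` are zero (identity factor on party `p`). -/
def TrivialAt (t : ∀ p, ιI p × ιO p) (p : P) : Prop :=
  (t p).1 = 0 ∧ (t p).2 = 0

/-- A term is in type on party `p` if it is nontrivial on the input system of `p`
and trivial (identity) on the output system of `p`. -/
def InTypeAt (t : ∀ p, ιI p × ιO p) (p : P) : Prop :=
  (t p).1 ≠ 0 ∧ (t p).2 = 0

/-- A term includes the out type on party `p` if it is nontrivial on the output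
system of `p`. -/
def IncludesOutAt (t : ∀ p, ιI p × ιO p) (p : P) : Prop :=
  (t p).2 ≠ 0

/-- A term is nontrivial if it is nontrivial on some party
(i.e. it is not the identity term). -/
def NontrivialTerm (t : ∀ p, ιI p × ιO p) : Prop :=
  ∃ p, ¬ TrivialAt t p

/-- The Oreshkov–Giarmatzi condition on Hilbert–Schmidt coefficients: every nonzero
nontrivial term is in type on at least one party. -/
def OGCoeffs (w : (∀ p, ιI p × ιO p) → ℝ) : Prop :=
  ∀ t, w t ≠ 0 → NontrivialTerm t → ∃ p, InTypeAt t p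

end types

section process

variable {I O : P → Type*} [∀ p, Fintype (I p)] [∀ p, DecidableEq (I p)]
  [∀ p, Fintype (O p)] [∀ p, DecidableEq (O p)]
  {ιI ιO : P → Type*} [∀ p, Fintype (ιI p)] [∀ p, Zero (ιI p)]
  [∀ p, Fintype (ιO p)] [∀ p, Zero (ιO p)]

/-- `W` is a valid process with Hilbert–Schmidt coefficients `w` (relative to the
Hilbert–Schmidt bases `σI`, `σO`): it is positive semidefinite, has trace equal to the
product `d_O` of the output dimensions, has expansion given by `w`, and every nonzero
nontrivial Hilbert–Schmidt term of it is in type on at least one party. -/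
def IsProcessWith (σI : ∀ p, ιI p → Matrix (I p) (I p) ℂ)
    (σO : ∀ p, ιO p → Matrix (O p) (O p) ℂ)
    (W : Matrix ((p : P) → I p × O p) ((p : P) → I p × O p) ℂ)
    (w : (∀ p, ιI p × ιO p) → ℝ) : Prop :=
  W.PosSemidef ∧
  W.trace = ∏ p, (Fintype.card (O p) : ℂ) ∧
  W = expand σI σO w ∧
  OGCoeffs w

/-- `W` is a valid process (relative to the Hilbert–Schmidt bases `σI`, `σO`). -/
def IsProcess (σI : ∀ p, ιI p → Matrix (I p) (I p) ℂ)
    (σO : ∀ p, ιO p → Matrix (O p) (O p) ℂ)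
    (W : Matrix ((p : P) → I p × O p) ((p : P) → I p × O p) ℂ) : Prop :=
  ∃ w, IsProcessWith σI σO W w

end process

section product

variable {I' O' I'' O'' : P → Type*}

/-- The tensor product `P = W ⊗ Z` of an operator `W` for parties `A', B', …` and an
operator `Z` for parties `A'', B'', …`, regarded as an operator for the combined
parties `A = A'A''` (input `a₁ = a₁'a₁''`, output `a₂ = a₂'a₂''`), `B = B'B''`, …. -/
def prodOp (W : Matrix ((p : P) → I' p × O' p) ((p : P) → I' p × O' p) ℂ)
    (Z : Matrix ((p : P) → I'' p × O'' p) ((p : P) → I'' p × O'' p) ℂ) :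
    Matrix ((p : P) → (I' p × I'' p) × (O' p × O'' p))
      ((p : P) → (I' p × I'' p) × (O' p × O'' p)) ℂ :=
  fun x y =>
    W (fun p => ((x p).1.1, (x p).2.1)) (fun p => ((y p).1.1, (y p).2.1)) *
    Z (fun p => ((x p).1.2, (x p).2.2)) (fun p => ((y p).1.2, (y p).2.2))

end product

/-- The Hilbert–Schmidt basis of a combined system, consisting of the tensor (Kronecker)
products of the basis elements of the two subsystems; its distinguished (identity)
element is the product of the two distinguished elements. -/
def prodBasis {n n' ι ι' : Type*} (σ : ι → Matrix n n ℂ) (σ' : ι' → Matrix n' n' ℂ) :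
    ι × ι' → Matrix (n × n') (n × n') ℂ :=
  fun i => σ i.1 ⊗ₖ σ' i.2

section coeffs

variable {ιI' ιO' ιI'' ιO'' : P → Type*}

/-- The Hilbert–Schmidt coefficients of a tensor product `W ⊗ Z` in terms of the
coefficients `w` of `W` and `z` of `Z`. -/
def prodCoeffs (w : (∀ p, ιI' p × ιO' p) → ℝ) (z : (∀ p, ιI'' p × ιO'' p) → ℝ) :
    (∀ p, (ιI' p × ιI'' p) × (ιO' p × ιO'' p)) → ℝ :=
  fun u => w (fun p => ((u p).1.1, (u p).2.1)) * z (fun p => ((u p).1.2, (u p).2.2))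

/-- The multi-index of the tensor product of the term `t` of `W` and the term `s`
of `Z`, as a term for the combined parties. -/
def combineTerm (t : ∀ p, ιI' p × ιO' p) (s : ∀ p, ιI'' p × ιO'' p) :
    ∀ p, (ιI' p × ιI'' p) × (ιO' p × ιO'' p) :=
  fun p => (((t p).1, (s p).1), ((t p).2, (s p).2))

end coeffs

section twoparty

variable {ιI ιO : Fin 2 → Type*} [∀ p, Zero (ιI p)] [∀ p, Zero (ιO p)]

/-- For two parties `A` (party `0`) and `B` (party `1`), an `A` to `B` signalling
term: a term of type `a₂b₁` or `a₁a₂b₁`, i.e. nontrivial on `a₂` and on `b₁` and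
trivial on `b₂`. -/
def AtoBSig (t : ∀ p, ιI p × ιO p) : Prop :=
  (t 0).2 ≠ 0 ∧ (t 1).1 ≠ 0 ∧ (t 1).2 = 0

/-- A `B` to `A` signalling term: a term of type `a₁b₂` or `a₁b₁b₂`, i.e. nontrivial
on `b₂` and on `a₁` and trivial on `a₂`. -/
def BtoASig (t : ∀ p, ιI p × ιO p) : Prop :=
  (t 1).2 ≠ 0 ∧ (t 0).1 ≠ 0 ∧ (t 0).2 = 0

end twoparty

/-- The Pauli (Hilbert–Schmidt) basis `{𝟙, σ₁, σ₂, σ₃}` of qubit operators. -/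
noncomputable def pauli : Fin 4 → Matrix (Fin 2) (Fin 2) ℂ :=
  ![1, !![0, 1; 1, 0], !![0, -Complex.I; Complex.I, 0], !![1, 0; 0, -1]]

/-- The maximally mixed qubit state `ω = 𝟙/2`. -/
noncomputable def omega2 : Matrix (Fin 2) (Fin 2) ℂ := (2 : ℂ)⁻¹ • 1

/-- The maximally correlating two-qubit state `ρ_∼ = (𝟙⊗𝟙 + σ₃⊗σ₃)/4`. -/
noncomputable def rhoCorr2 : Matrix (Fin 2 × Fin 2) (Fin 2 × Fin 2) ℂ :=
  (4 : ℂ)⁻¹ • ((1 : Matrix (Fin 2) (Fin 2) ℂ) ⊗ₖ (1 : Matrix (Fin 2) (Fin 2) ℂ)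
    + pauli 3 ⊗ₖ pauli 3)

/-- The two-party qubit process
`W = (d_O/2) (ω^{x₁} ⊗ ρ_∼^{x₂y₁} ⊗ ω^{y₂} + ω^{x₂} ⊗ ρ_∼^{x₁y₂} ⊗ ω^{y₁})`
(`d_O = 4`), written as a matrix on the total Hilbert space of the two parties
`0 = X` (input `x₁`, output `x₂`) and `1 = Y` (input `y₁`, output `y₂`),
all four systems being qubits. -/
noncomputable def Wq :
    Matrix ((p : Fin 2) → Fin 2 × Fin 2) ((p : Fin 2) → Fin 2 × Fin 2) ℂ :=
  fun x y =>
    2 * (omega2 (x 0).1 (y 0).1 * rhoCorr2 ((x 0).2, (x 1).1) ((y 0).2, (y 1).1)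
          * omega2 (x 1).2 (y 1).2
       + omega2 (x 0).2 (y 0).2 * rhoCorr2 ((x 0).1, (x 1).2) ((y 0).1, (y 1).2)
          * omega2 (x 1).1 (y 1).1)

/-- The maximally mixed state `ω = 𝟙/4` of a 4-dimensional (two-qubit) system. -/
noncomputable def omega4 : Matrix (Fin 2 × Fin 2) (Fin 2 × Fin 2) ℂ := (4 : ℂ)⁻¹ • 1

/-- The maximally correlating state `ρ_∼ = (1/4) ∑_{i=0}^{3} |ii⟩⟨ii|` of two copies of a
4-dimensional (two-qubit) system, in the computational basis. -/
noncomputable def rhoCorr4 :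
    Matrix ((Fin 2 × Fin 2) × (Fin 2 × Fin 2)) ((Fin 2 × Fin 2) × (Fin 2 × Fin 2)) ℂ :=
  fun r c => if r.1 = r.2 ∧ c.1 = c.2 ∧ r.1 = c.1 then (4 : ℂ)⁻¹ else 0

/-- The two-party process
`W = (d_O/2) (ω^{a₁} ⊗ ρ_∼^{a₂b₁} ⊗ ω^{b₂} + ω^{a₂} ⊗ ρ_∼^{a₁b₂} ⊗ ω^{b₁})`
(`d_O = 16`) on the combined parties `0 = A = A'A''` and `1 = B = B'B''`, whose systems
`a₁ = a₁'a₁''` etc. are each two qubits: the first qubit of each pair is the primed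
system, the second the double-primed one. -/
noncomputable def W4 :
    Matrix ((p : Fin 2) → (Fin 2 × Fin 2) × (Fin 2 × Fin 2))
      ((p : Fin 2) → (Fin 2 × Fin 2) × (Fin 2 × Fin 2)) ℂ :=
  fun x y =>
    8 * (omega4 (x 0).1 (y 0).1 * rhoCorr4 ((x 0).2, (x 1).1) ((y 0).2, (y 1).1)
          * omega4 (x 1).2 (y 1).2
       + omega4 (x 0).2 (y 0).2 * rhoCorr4 ((x 0).1, (x 1).2) ((y 0).1, (y 1).2)
          * omega4 (x 1).1 (y 1).1)

/-- Partial trace over the double-primed systems `a₁'', a₂'', b₁'', b₂''` (the second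
qubit of each of the four two-qubit systems). -/
noncomputable def ptraceSecond
    (W : Matrix ((p : Fin 2) → (Fin 2 × Fin 2) × (Fin 2 × Fin 2))
      ((p : Fin 2) → (Fin 2 × Fin 2) × (Fin 2 × Fin 2)) ℂ) :
    Matrix ((p : Fin 2) → Fin 2 × Fin 2) ((p : Fin 2) → Fin 2 × Fin 2) ℂ :=
  fun x y => ∑ e : (p : Fin 2) → Fin 2 × Fin 2,
    W (fun p => (((x p).1, (e p).1), ((x p).2, (e p).2)))
      (fun p => (((y p).1, (e p).1), ((y p).2, (e p).2)))

/-- Partial trace over the primed systems `a₁', a₂', b₁', b₂'` (the first qubit of each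
of the four two-qubit systems). -/
noncomputable def ptraceFirst
    (W : Matrix ((p : Fin 2) → (Fin 2 × Fin 2) × (Fin 2 × Fin 2))
      ((p : Fin 2) → (Fin 2 × Fin 2) × (Fin 2 × Fin 2)) ℂ) :
    Matrix ((p : Fin 2) → Fin 2 × Fin 2) ((p : Fin 2) → Fin 2 × Fin 2) ℂ :=
  fun x y => ∑ e : (p : Fin 2) → Fin 2 × Fin 2,
    W (fun p => (((e p).1, (x p).1), ((e p).2, (x p).2)))
      (fun p => (((e p).1, (y p).1), ((e p).2, (y p).2)))



/-- Diagonal entries of `Wq`. -/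
noncomputable def dWq (x : (p : Fin 2) → Fin 2 × Fin 2) : ℂ :=
  (4 : ℂ)⁻¹ * ((if (x 0).2 = (x 1).1 then 1 else 0) + (if (x 0).1 = (x 1).2 then 1 else 0))

lemma rho2_apply (b c b' c' : Fin 2) :
    rhoCorr2 (b, c) (b', c') =
      (4:ℂ)⁻¹ * ((1 : Matrix (Fin 2) (Fin 2) ℂ) b b' * (1 : Matrix (Fin 2) (Fin 2) ℂ) c c'
        + pauli 3 b b' * pauli 3 c c') := by
  by_cases h1 : b = b' <;> by_cases h2 : c = c' <;>
    simp [rhoCorr2, Matrix.kroneckerMap_apply, Matrix.one_apply, Prod.ext_iff, h1, h2]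

lemma rho2_apply' (b c b' c' : Fin 2) :
    rhoCorr2 (b, c) (b', c') = if b = b' ∧ c = c' ∧ b = c then 2⁻¹ else 0 := by
  rw [rho2_apply]
  fin_cases b <;> fin_cases c <;> fin_cases b' <;> fin_cases c' <;>
    simp [pauli, Matrix.one_apply] <;> norm_num

lemma piFin2_eq_iff {α : Fin 2 → Type*} (x y : (p : Fin 2) → α p) :
    x = y ↔ x 0 = y 0 ∧ x 1 = y 1 := by
  constructor
  · rintro rfl; exact ⟨rfl, rfl⟩
  · rintro ⟨h0, h1⟩; funext p; fin_cases p <;> assumption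

lemma Wq_eq_diagonal : Wq = Matrix.diagonal dWq := by
  funext x y
  simp only [Wq, Matrix.diagonal, Matrix.of_apply, omega2, Matrix.smul_apply, smul_eq_mul,
    rho2_apply', Matrix.one_apply, dWq, piFin2_eq_iff, Prod.ext_iff]
  generalize (x 0).1 = a
  generalize (x 0).2 = b
  generalize (x 1).1 = c
  generalize (x 1).2 = d
  generalize (y 0).1 = a'
  generalize (y 0).2 = b'
  generalize (y 1).1 = c'
  generalize (y 1).2 = d'
  clear x y
  by_cases h1 : a = a' <;> by_cases h2 : b = b' <;> by_cases h3 : c = c' <;>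
    by_cases h4 : d = d' <;> by_cases h5 : b = c <;> by_cases h6 : a = d <;>
      simp [h1, h2, h3, h4, h5, h6] <;> split_ifs <;>
        first | (norm_num; done) | tauto | (simp_all <;> tauto)

lemma dWq_nonneg (x : (p : Fin 2) → Fin 2 × Fin 2) : 0 ≤ dWq x := by
  unfold dWq; split_ifs <;> norm_num [Complex.le_def]

lemma Wq_posSemidef : Wq.PosSemidef := by
  rw [Wq_eq_diagonal]
  exact Matrix.posSemidef_diagonal_iff.2 dWq_nonneg

lemma Wq_trace : Wq.trace = 4 := by
  rw [Wq_eq_diagonal, Matrix.trace_diagonal,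
    ← Equiv.sum_comp (piFinTwoEquiv (fun _ : Fin 2 => Fin 2 × Fin 2)).symm dWq]
  simp only [piFinTwoEquiv, Equiv.coe_fn_symm_mk, dWq, Fintype.sum_prod_type,
    Fin.sum_univ_two, Fin.cons_zero, Fin.cons_one]
  norm_num

/-- The three relevant Pauli multi-indices. -/
def tId : (p : Fin 2) → Fin 4 × Fin 4 := fun _ => (0, 0)
def tA : (p : Fin 2) → Fin 4 × Fin 4 := ![((0 : Fin 4), (3 : Fin 4)), ((3 : Fin 4), (0 : Fin 4))]
def tB : (p : Fin 2) → Fin 4 × Fin 4 := ![((3 : Fin 4), (0 : Fin 4)), ((0 : Fin 4), (3 : Fin 4))]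

/-- The Hilbert–Schmidt coefficients of `Wq`. -/
noncomputable def wq (t : (p : Fin 2) → Fin 4 × Fin 4) : ℝ :=
  (if t = tId then 4⁻¹ else 0) + (if t = tA then 8⁻¹ else 0) + (if t = tB then 8⁻¹ else 0)

lemma expand_wq :
    expand (fun _ : Fin 2 => pauli) (fun _ : Fin 2 => pauli) wq =
      ((4:ℝ)⁻¹) • hsTerm (fun _ : Fin 2 => pauli) (fun _ : Fin 2 => pauli) tId
      + ((8:ℝ)⁻¹) • hsTerm (fun _ : Fin 2 => pauli) (fun _ : Fin 2 => pauli) tA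
      + ((8:ℝ)⁻¹) • hsTerm (fun _ : Fin 2 => pauli) (fun _ : Fin 2 => pauli) tB := by
  unfold expand wq
  push_cast
  simp only [add_smul, Finset.sum_add_distrib, ite_smul, zero_smul,
    Finset.sum_ite_eq' Finset.univ, Finset.mem_univ, if_true]
  norm_num

lemma pauli_zero : pauli 0 = 1 := rfl

lemma Wq_expand : Wq = expand (fun _ : Fin 2 => pauli) (fun _ : Fin 2 => pauli) wq := by
  rw [expand_wq]
  funext x y
  simp only [Matrix.add_apply, Matrix.smul_apply, smul_eq_mul, hsTerm, Fin.prod_univ_two,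
    Wq, omega2, rho2_apply, tId, tA, tB, pauli_zero, Complex.real_smul]
  simp only [Matrix.cons_val_zero, Matrix.cons_val_one, Matrix.head_cons, pauli_zero,
    Complex.ofReal_inv, Complex.ofReal_ofNat]
  ring

section Statement8

/-- The operator `W^{xy} = (d_O/2)(ω^{x₁} ⊗ ρ_∼^{x₂y₁} ⊗ ω^{y₂} + ω^{x₂} ⊗ ρ_∼^{x₁y₂} ⊗ ω^{y₁})`
on two parties `X` and `Y` with all four systems `x₁, x₂, y₁, y₂` qubits—where
`d_O = 4`, `ω = 𝟙/2` is the maximally mixed qubit state and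
`ρ_∼ = (𝟙⊗𝟙 + σ₃⊗σ₃)/4`—is a valid process: it is positive semidefinite, has trace
`d_O = 4`, and every nonzero nontrivial term of its Hilbert–Schmidt (Pauli)
expansion is in type on at least one party. -/
theorem statement8 :
    Wq.PosSemidef ∧ Wq.trace = 4 ∧
    IsProcess (fun _ : Fin 2 => pauli) (fun _ : Fin 2 => pauli) Wq := by
  refine ⟨Wq_posSemidef, Wq_trace, wq, Wq_posSemidef, ?_, Wq_expand, ?_⟩
  · rw [Wq_trace]; norm_num
  · intro t hw hnt
    rcases eq_or_ne t tId with rfl | h0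
    · exact absurd hnt (by simp [NontrivialTerm, TrivialAt, tId])
    rcases eq_or_ne t tA with rfl | hA
    · exact ⟨1, by simp [InTypeAt, tA], by simp [InTypeAt, tA]⟩
    rcases eq_or_ne t tB with rfl | hB
    · exact ⟨0, by simp [InTypeAt, tB], by simp [InTypeAt, tB]⟩
    · exact absurd (by simp [wq, h0, hA, hB]) hw

end Statement8

end ProcessPaper
end

section
/- (Persistence of invalidity under further products.) Let W, Z, V be processes such that the product P = W ⊗ Z for the combined parties is not a valid process. Then for any valid process V on a matching set of parties, the further product P ⊗ V (for the correspondingly combined parties) is also not a valid process: the nontrivial Hilbert–Schmidt term of P that is in type on no combined party, tensored with the identity term of V, is a nonzero nontrivial term of P ⊗ V that is in type on no combined party. Consequently, if a set of processes cannot form a valid product in one sequence of iterated pairwise products, no ordering of the iterated products yields a valid process. -/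
/-!
Tensoring processes multiplies their Hilbert–Schmidt coefficients, and a valid process `V` has a
nonzero identity coefficient `v 0`: only the identity term has nonzero trace, while
`tr V = ∏ d_O ≠ 0`. Hence the offending term `u` of `W ⊗ Z` (nonzero, nontrivial, in type on no
party), paired with the identity term of `V`, is a nonzero term of `(W ⊗ Z) ⊗ V` whose type on
every combined party is that of `u`, and likewise for `V ⊗ (W ⊗ Z)`. Since the product
Hilbert–Schmidt terms are trace-orthogonal, coefficients are unique, so no expansion of either
product satisfies the validity condition.
-/

open Matrix Kronecker BigOperators
open scoped ComplexOrder

namespace ProcessPaper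

variable {P : Type*} [Fintype P] [DecidableEq P]

section TraceOrthogonal

variable {n ι : Type*} [Fintype n]

/-- For a Hermitian family: Hilbert–Schmidt orthogonal, with no zero member. -/
def IsTraceOrthogonal (σ : ι → Matrix n n ℂ) : Prop :=
  (∀ i j, i ≠ j → (σ i * σ j).trace = 0) ∧ ∀ i, (σ i * σ i).trace ≠ 0

theorem IsHSBasis.isTraceOrthogonal [DecidableEq n] [Fintype ι] [Zero ι]
    {σ : ι → Matrix n n ℂ} (h : IsHSBasis σ) : IsTraceOrthogonal σ := by
  obtain ⟨-, hherm, -, -, horth, hne⟩ := h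
  refine ⟨horth, fun i => ?_⟩
  have h' := trace_conjTranspose_mul_self_eq_zero_iff.not.mpr (hne i)
  rwa [(hherm i).eq] at h'

theorem IsHSBasis.nonempty [DecidableEq n] [Fintype ι] [Zero ι]
    {σ : ι → Matrix n n ℂ} (h : IsHSBasis σ) : Nonempty n := by
  by_contra hn
  rw [not_nonempty_iff] at hn
  exact h.2.2.2.2.2 0 (Matrix.ext fun i => isEmptyElim i)

theorem IsTraceOrthogonal.prodBasis {n' ι' : Type*} [Fintype n']
    {σ : ι → Matrix n n ℂ} {σ' : ι' → Matrix n' n' ℂ}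
    (h : IsTraceOrthogonal σ) (h' : IsTraceOrthogonal σ') :
    IsTraceOrthogonal (ProcessPaper.prodBasis σ σ') := by
  have trace_mul (i j : ι × ι') :
      (ProcessPaper.prodBasis σ σ' i * ProcessPaper.prodBasis σ σ' j).trace =
      (σ i.1 * σ j.1).trace * (σ' i.2 * σ' j.2).trace := by
    rw [ProcessPaper.prodBasis, ProcessPaper.prodBasis, ← mul_kronecker_mul, trace_kronecker]
  refine ⟨fun i j hij => ?_, fun i => ?_⟩
  · rw [trace_mul]
    rcases not_and_or.mp (mt Prod.ext_iff.mpr hij) with h1 | h2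
    · rw [h.1 _ _ h1, zero_mul]
    · rw [h'.1 _ _ h2, mul_zero]
  · rw [trace_mul]
    exact mul_ne_zero (h.2 _) (h'.2 _)

theorem IsTraceOrthogonal.trace_sum_smul_mul [Fintype ι] {σ : ι → Matrix n n ℂ}
    (h : IsTraceOrthogonal σ) (c : ι → ℂ) (j : ι) :
    ((∑ i, c i • σ i) * σ j).trace = c j * (σ j * σ j).trace := by
  rw [Finset.sum_mul, trace_sum, Finset.sum_eq_single j
    (fun i _ hij => by rw [smul_mul, trace_smul, h.1 i j hij, smul_zero])
    (fun hj => absurd (Finset.mem_univ j) hj), smul_mul, trace_smul, smul_eq_mul]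

theorem IsTraceOrthogonal.sum_smul_injective [Fintype ι] {σ : ι → Matrix n n ℂ}
    (h : IsTraceOrthogonal σ) : Function.Injective fun c : ι → ℂ => ∑ i, c i • σ i := by
  intro c c' hcc'
  funext j
  have hj := congrArg (fun M => (M * σ j).trace) hcc'
  simp only [h.trace_sum_smul_mul] at hj
  exact mul_right_cancel₀ (h.2 j) hj

end TraceOrthogonal

section TensorFamily

variable {P : Type*} [Fintype P] {I O : P → Type*}

theorem tensorFamily_mul [DecidableEq P] [∀ p, Fintype (I p)] [∀ p, Fintype (O p)]
    (M N : ∀ p, Matrix (I p × O p) (I p × O p) ℂ) :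
    tensorFamily M * tensorFamily N = tensorFamily fun p => M p * N p := by
  ext x y
  simp only [tensorFamily, mul_apply, ← Finset.prod_mul_distrib]
  exact (Fintype.prod_sum fun p a => M p (x p) a * N p a (y p)).symm

theorem trace_tensorFamily [DecidableEq P] [∀ p, Fintype (I p)] [∀ p, Fintype (O p)]
    (M : ∀ p, Matrix (I p × O p) (I p × O p) ℂ) :
    (tensorFamily M).trace = ∏ p, (M p).trace :=
  (Fintype.prod_sum fun p a => M p a a).symm

theorem tensorFamily_one [∀ p, DecidableEq (I p)] [∀ p, DecidableEq (O p)] :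
    tensorFamily (fun p => (1 : Matrix (I p × O p) (I p × O p) ℂ)) = 1 := by
  ext x y
  simp [tensorFamily, one_apply, Fintype.prod_boole, funext_iff]

theorem IsTraceOrthogonal.tensorFamily [DecidableEq P] [∀ p, Fintype (I p)]
    [∀ p, Fintype (O p)] {ι : P → Type*}
    {σ : ∀ p, ι p → Matrix (I p × O p) (I p × O p) ℂ} (h : ∀ p, IsTraceOrthogonal (σ p)) :
    IsTraceOrthogonal fun t : (∀ p, ι p) => ProcessPaper.tensorFamily fun p => σ p (t p) := by
  have trace_mul (t s : ∀ p, ι p) :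
      ((ProcessPaper.tensorFamily fun p => σ p (t p)) *
        ProcessPaper.tensorFamily fun p => σ p (s p)).trace =
        ∏ p, (σ p (t p) * σ p (s p)).trace := by
    rw [tensorFamily_mul, trace_tensorFamily]
  refine ⟨fun t s hts => ?_, fun t => ?_⟩
  · obtain ⟨p, hp⟩ := Function.ne_iff.mp hts
    rw [trace_mul]
    exact Finset.prod_eq_zero (Finset.mem_univ p) ((h p).1 _ _ hp)
  · rw [trace_mul]
    exact Finset.prod_ne_zero_iff.mpr fun p _ => (h p).2 _

end TensorFamily

section Expansion

variable {P : Type*} [Fintype P] {I O : P → Type*} {ιI ιO : P → Type*}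
  {σI : ∀ p, ιI p → Matrix (I p) (I p) ℂ} {σO : ∀ p, ιO p → Matrix (O p) (O p) ℂ}

theorem hsTerm_eq_tensorFamily (t : ∀ p, ιI p × ιO p) :
    hsTerm σI σO t = tensorFamily fun p => prodBasis (σI p) (σO p) (t p) :=
  rfl

theorem isTraceOrthogonal_hsTerm [DecidableEq P] [∀ p, Fintype (I p)] [∀ p, Fintype (O p)]
    (hI : ∀ p, IsTraceOrthogonal (σI p)) (hO : ∀ p, IsTraceOrthogonal (σO p)) :
    IsTraceOrthogonal (hsTerm σI σO) := by
  rw [show hsTerm σI σO = _ from funext hsTerm_eq_tensorFamily]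
  exact IsTraceOrthogonal.tensorFamily fun p => (hI p).prodBasis (hO p)

theorem hsTerm_zero [∀ p, DecidableEq (I p)] [∀ p, DecidableEq (O p)]
    [∀ p, Zero (ιI p)] [∀ p, Zero (ιO p)]
    (hI : ∀ p, σI p 0 = 1) (hO : ∀ p, σO p 0 = 1) : hsTerm σI σO 0 = 1 := by
  simp [hsTerm_eq_tensorFamily, prodBasis, hI, hO, tensorFamily_one]

variable [DecidableEq P] [∀ p, Fintype (I p)] [∀ p, Fintype (O p)]
  [∀ p, Fintype (ιI p)] [∀ p, Fintype (ιO p)]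

theorem expand_injective (hI : ∀ p, IsTraceOrthogonal (σI p))
    (hO : ∀ p, IsTraceOrthogonal (σO p)) : Function.Injective (expand σI σO) := by
  intro c c' h
  funext t
  exact_mod_cast congrFun ((isTraceOrthogonal_hsTerm hI hO).sum_smul_injective h) t

variable [∀ p, Zero (ιI p)] [∀ p, Zero (ιO p)]

theorem not_isProcess_expand (hI : ∀ p, IsTraceOrthogonal (σI p))
    (hO : ∀ p, IsTraceOrthogonal (σO p)) {c : (∀ p, ιI p × ιO p) → ℝ} (hc : ¬ OGCoeffs c) :
    ¬ IsProcess σI σO (expand σI σO c) := by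
  rintro ⟨c', -, -, hcc', hOG⟩
  exact hc (expand_injective hI hO hcc' ▸ hOG)

theorem IsProcessWith.coeff_zero_ne_zero [∀ p, DecidableEq (I p)] [∀ p, DecidableEq (O p)]
    (hσI : ∀ p, IsHSBasis (σI p)) (hσO : ∀ p, IsHSBasis (σO p))
    {V : Matrix ((p : P) → I p × O p) ((p : P) → I p × O p) ℂ}
    {v : (∀ p, ιI p × ιO p) → ℝ} (hV : IsProcessWith σI σO V v) : v 0 ≠ 0 := by
  intro hv
  have hT := isTraceOrthogonal_hsTerm (fun p => (hσI p).isTraceOrthogonal)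
    (fun p => (hσO p).isTraceOrthogonal)
  have hone : hsTerm σI σO 0 = 1 := hsTerm_zero (fun p => (hσI p).2.2.1) (fun p => (hσO p).2.2.1)
  have htrace : V.trace = 0 := by
    rw [← mul_one V, ← hone, hV.2.2.1, expand, hT.trace_sum_smul_mul, hv, Complex.ofReal_zero,
      zero_mul]
  rw [hV.2.1] at htrace
  exact Finset.prod_ne_zero_iff.mpr
    (fun p _ => Nat.cast_ne_zero.mpr (@Fintype.card_ne_zero _ _ (hσO p).nonempty)) htrace

end Expansion

section Product

variable {P : Type*} {I' O' I'' O'' : P → Type*} {ιI' ιO' ιI'' ιO'' : P → Type*}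

/-- The reordering of tensor factors under which `prodOp W Z` is the Kronecker product `W ⊗ₖ Z`. -/
def splitEquiv (I' O' I'' O'' : P → Type*) :
    (∀ p, (I' p × I'' p) × (O' p × O'' p)) ≃
      ((∀ p, I' p × O' p) × (∀ p, I'' p × O'' p)) where
  toFun x := (fun p => ((x p).1.1, (x p).2.1), fun p => ((x p).1.2, (x p).2.2))
  invFun ab := fun p => (((ab.1 p).1, (ab.2 p).1), ((ab.1 p).2, (ab.2 p).2))
  left_inv _ := rfl
  right_inv _ := rfl

def combineTermEquiv (ιI' ιO' ιI'' ιO'' : P → Type*) :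
    ((∀ p, ιI' p × ιO' p) × (∀ p, ιI'' p × ιO'' p)) ≃
      (∀ p, (ιI' p × ιI'' p) × (ιO' p × ιO'' p)) where
  toFun ts := combineTerm ts.1 ts.2
  invFun u := (fun p => ((u p).1.1, (u p).2.1), fun p => ((u p).1.2, (u p).2.2))
  left_inv _ := rfl
  right_inv _ := rfl

theorem prodOp_eq_submatrix
    (W : Matrix ((p : P) → I' p × O' p) ((p : P) → I' p × O' p) ℂ)
    (Z : Matrix ((p : P) → I'' p × O'' p) ((p : P) → I'' p × O'' p) ℂ) :
    prodOp W Z = (W ⊗ₖ Z).submatrix (splitEquiv I' O' I'' O'') (splitEquiv I' O' I'' O'') :=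
  rfl

theorem prodOp_sum_smul {A B : Type*} [Fintype A] [Fintype B] (a : A → ℝ) (b : B → ℝ)
    (M : A → Matrix ((p : P) → I' p × O' p) ((p : P) → I' p × O' p) ℂ)
    (N : B → Matrix ((p : P) → I'' p × O'' p) ((p : P) → I'' p × O'' p) ℂ) :
    prodOp (∑ t, (a t : ℂ) • M t) (∑ s, (b s : ℂ) • N s) =
      ∑ t, ∑ s, ((a t * b s : ℝ) : ℂ) • prodOp (M t) (N s) := by
  ext x y
  simp only [prodOp, Matrix.sum_apply, Matrix.smul_apply, smul_eq_mul, Fintype.sum_mul_sum,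
    Complex.ofReal_mul]
  exact Finset.sum_congr rfl fun t _ => Finset.sum_congr rfl fun s _ => by ring

variable [Fintype P]

theorem posSemidef_prodOp [∀ p, Fintype (I' p)] [∀ p, Fintype (O' p)] [∀ p, Fintype (I'' p)]
    [∀ p, Fintype (O'' p)] [∀ p, DecidableEq (I' p)] [∀ p, DecidableEq (O' p)]
    [∀ p, DecidableEq (I'' p)] [∀ p, DecidableEq (O'' p)]
    {W : Matrix ((p : P) → I' p × O' p) ((p : P) → I' p × O' p) ℂ}
    {Z : Matrix ((p : P) → I'' p × O'' p) ((p : P) → I'' p × O'' p) ℂ}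
    (hW : W.PosSemidef) (hZ : Z.PosSemidef) : (prodOp W Z).PosSemidef := by
  rw [prodOp_eq_submatrix]
  exact (posSemidef_submatrix_equiv _).mpr (hW.kronecker hZ)

theorem trace_prodOp [DecidableEq P] [∀ p, Fintype (I' p)] [∀ p, Fintype (O' p)]
    [∀ p, Fintype (I'' p)] [∀ p, Fintype (O'' p)]
    (W : Matrix ((p : P) → I' p × O' p) ((p : P) → I' p × O' p) ℂ)
    (Z : Matrix ((p : P) → I'' p × O'' p) ((p : P) → I'' p × O'' p) ℂ) :
    (prodOp W Z).trace = W.trace * Z.trace := by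
  rw [prodOp_eq_submatrix, ← trace_kronecker W Z]
  exact Fintype.sum_equiv (splitEquiv I' O' I'' O'') _ _ fun _ => rfl

theorem prodOp_hsTerm (σI' : ∀ p, ιI' p → Matrix (I' p) (I' p) ℂ)
    (σO' : ∀ p, ιO' p → Matrix (O' p) (O' p) ℂ)
    (σI'' : ∀ p, ιI'' p → Matrix (I'' p) (I'' p) ℂ)
    (σO'' : ∀ p, ιO'' p → Matrix (O'' p) (O'' p) ℂ)
    (t : ∀ p, ιI' p × ιO' p) (s : ∀ p, ιI'' p × ιO'' p) :
    prodOp (hsTerm σI' σO' t) (hsTerm σI'' σO'' s) =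
      hsTerm (fun p => prodBasis (σI' p) (σI'' p)) (fun p => prodBasis (σO' p) (σO'' p))
        (combineTerm t s) := by
  ext x y
  simp only [prodOp, hsTerm, ← Finset.prod_mul_distrib]
  refine Finset.prod_congr rfl fun p _ => ?_
  simp only [combineTerm, prodBasis, kroneckerMap_apply]
  ring

theorem prodOp_expand [DecidableEq P] [∀ p, Fintype (ιI' p)] [∀ p, Fintype (ιO' p)]
    [∀ p, Fintype (ιI'' p)] [∀ p, Fintype (ιO'' p)]
    (σI' : ∀ p, ιI' p → Matrix (I' p) (I' p) ℂ)
    (σO' : ∀ p, ιO' p → Matrix (O' p) (O' p) ℂ)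
    (σI'' : ∀ p, ιI'' p → Matrix (I'' p) (I'' p) ℂ)
    (σO'' : ∀ p, ιO'' p → Matrix (O'' p) (O'' p) ℂ)
    (w : (∀ p, ιI' p × ιO' p) → ℝ) (z : (∀ p, ιI'' p × ιO'' p) → ℝ) :
    prodOp (expand σI' σO' w) (expand σI'' σO'' z) =
      expand (fun p => prodBasis (σI' p) (σI'' p)) (fun p => prodBasis (σO' p) (σO'' p))
        (prodCoeffs w z) := by
  rw [expand, expand, prodOp_sum_smul, expand,
    ← Equiv.sum_comp (combineTermEquiv ιI' ιO' ιI'' ιO''), Fintype.sum_prod_type]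
  refine Finset.sum_congr rfl fun t _ => Finset.sum_congr rfl fun s _ => ?_
  rw [prodOp_hsTerm]
  rfl

end Product

section Coefficients

variable {P : Type*} {ιI' ιO' ιI'' ιO'' : P → Type*}
  [∀ p, Zero (ιI' p)] [∀ p, Zero (ιO' p)] [∀ p, Zero (ιI'' p)] [∀ p, Zero (ιO'' p)]

theorem NontrivialTerm.combineTerm_left {t : ∀ p, ιI' p × ιO' p} (ht : NontrivialTerm t)
    (s : ∀ p, ιI'' p × ιO'' p) : NontrivialTerm (combineTerm t s) := by
  obtain ⟨p, hp⟩ := ht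
  exact ⟨p, fun h => hp ⟨congrArg Prod.fst h.1, congrArg Prod.fst h.2⟩⟩

theorem NontrivialTerm.combineTerm_right (t : ∀ p, ιI' p × ιO' p) {s : ∀ p, ιI'' p × ιO'' p}
    (hs : NontrivialTerm s) : NontrivialTerm (combineTerm t s) := by
  obtain ⟨p, hp⟩ := hs
  exact ⟨p, fun h => hp ⟨congrArg Prod.snd h.1, congrArg Prod.snd h.2⟩⟩

theorem inTypeAt_combineTerm_zero_right {t : ∀ p, ιI' p × ιO' p} {p : P} :
    InTypeAt (combineTerm t (0 : ∀ p, ιI'' p × ιO'' p)) p ↔ InTypeAt t p := by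
  simp [InTypeAt, combineTerm, Prod.ext_iff]

theorem inTypeAt_combineTerm_zero_left {s : ∀ p, ιI'' p × ιO'' p} {p : P} :
    InTypeAt (combineTerm (0 : ∀ p, ιI' p × ιO' p) s) p ↔ InTypeAt s p := by
  simp [InTypeAt, combineTerm, Prod.ext_iff]

theorem OGCoeffs.of_prodCoeffs_right {c : (∀ p, ιI' p × ιO' p) → ℝ}
    {v : (∀ p, ιI'' p × ιO'' p) → ℝ} (hv : v 0 ≠ 0) (h : OGCoeffs (prodCoeffs c v)) :
    OGCoeffs c := fun t hc ht =>
  (h (combineTerm t 0) (mul_ne_zero hc hv) (ht.combineTerm_left 0)).imp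
    fun _ => inTypeAt_combineTerm_zero_right.mp

theorem OGCoeffs.of_prodCoeffs_left {v : (∀ p, ιI' p × ιO' p) → ℝ}
    {c : (∀ p, ιI'' p × ιO'' p) → ℝ} (hv : v 0 ≠ 0) (h : OGCoeffs (prodCoeffs v c)) :
    OGCoeffs c := fun t hc ht =>
  (h (combineTerm 0 t) (mul_ne_zero hv hc) (ht.combineTerm_right 0)).imp
    fun _ => inTypeAt_combineTerm_zero_left.mp

end Coefficients

section Validity

variable {P : Type*} [Fintype P] [DecidableEq P] {I' O' I'' O'' : P → Type*}
  [∀ p, Fintype (I' p)] [∀ p, DecidableEq (I' p)] [∀ p, Fintype (O' p)] [∀ p, DecidableEq (O' p)]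
  [∀ p, Fintype (I'' p)] [∀ p, DecidableEq (I'' p)]
  [∀ p, Fintype (O'' p)] [∀ p, DecidableEq (O'' p)]
  {ιI' ιO' ιI'' ιO'' : P → Type*}
  [∀ p, Fintype (ιI' p)] [∀ p, Zero (ιI' p)] [∀ p, Fintype (ιO' p)] [∀ p, Zero (ιO' p)]
  [∀ p, Fintype (ιI'' p)] [∀ p, Zero (ιI'' p)] [∀ p, Fintype (ιO'' p)] [∀ p, Zero (ιO'' p)]
  {σI' : ∀ p, ιI' p → Matrix (I' p) (I' p) ℂ} {σO' : ∀ p, ιO' p → Matrix (O' p) (O' p) ℂ}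
  {σI'' : ∀ p, ιI'' p → Matrix (I'' p) (I'' p) ℂ} {σO'' : ∀ p, ιO'' p → Matrix (O'' p) (O'' p) ℂ}

theorem IsProcessWith.prodOp
    {W : Matrix ((p : P) → I' p × O' p) ((p : P) → I' p × O' p) ℂ}
    {Z : Matrix ((p : P) → I'' p × O'' p) ((p : P) → I'' p × O'' p) ℂ}
    {w : (∀ p, ιI' p × ιO' p) → ℝ} {z : (∀ p, ιI'' p × ιO'' p) → ℝ}
    (hW : IsProcessWith σI' σO' W w) (hZ : IsProcessWith σI'' σO'' Z z)
    (hOG : OGCoeffs (prodCoeffs w z)) :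
    IsProcessWith (fun p => prodBasis (σI' p) (σI'' p)) (fun p => prodBasis (σO' p) (σO'' p))
      (ProcessPaper.prodOp W Z) (prodCoeffs w z) := by
  refine ⟨posSemidef_prodOp hW.1 hZ.1, ?_, by rw [hW.2.2.1, hZ.2.2.1, prodOp_expand], hOG⟩
  simp only [trace_prodOp, hW.2.1, hZ.2.1, Fintype.card_prod, Nat.cast_mul,
    Finset.prod_mul_distrib]

end Validity

section Statement12

variable {P : Type*} [Fintype P] [DecidableEq P]
  {I' O' I'' O'' I''' O''' : P → Type*}
  [∀ p, Fintype (I' p)] [∀ p, DecidableEq (I' p)]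
  [∀ p, Fintype (O' p)] [∀ p, DecidableEq (O' p)]
  [∀ p, Fintype (I'' p)] [∀ p, DecidableEq (I'' p)]
  [∀ p, Fintype (O'' p)] [∀ p, DecidableEq (O'' p)]
  [∀ p, Fintype (I''' p)] [∀ p, DecidableEq (I''' p)]
  [∀ p, Fintype (O''' p)] [∀ p, DecidableEq (O''' p)]
  {ιI' ιO' ιI'' ιO'' ιI''' ιO''' : P → Type*}
  [∀ p, Fintype (ιI' p)] [∀ p, Zero (ιI' p)]
  [∀ p, Fintype (ιO' p)] [∀ p, Zero (ιO' p)]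
  [∀ p, Fintype (ιI'' p)] [∀ p, Zero (ιI'' p)]
  [∀ p, Fintype (ιO'' p)] [∀ p, Zero (ιO'' p)]
  [∀ p, Fintype (ιI''' p)] [∀ p, Zero (ιI''' p)]
  [∀ p, Fintype (ιO''' p)] [∀ p, Zero (ιO''' p)]

/-- **Persistence of invalidity under further products.** Let `W`, `Z` be processes
(with Hilbert–Schmidt coefficients `w`, `z`) such that the product `P = W ⊗ Z` for the
combined parties is not a valid process. Then for any valid process `V` (with
coefficients `v`) on a matching set of parties, the further product `P ⊗ V` (for the
correspondingly combined parties) is also not a valid process: the nontrivial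
Hilbert–Schmidt term `u` of `P` that is in type on no combined party, tensored with the
identity term of `V`, is a nonzero nontrivial term of `P ⊗ V` that is in type on no
combined party. Consequently, changing the sequence of construction does not help:
the product in the other order, `V ⊗ P`, is not a valid process either. -/
theorem statement12
    (σI' : ∀ p, ιI' p → Matrix (I' p) (I' p) ℂ)
    (σO' : ∀ p, ιO' p → Matrix (O' p) (O' p) ℂ)
    (σI'' : ∀ p, ιI'' p → Matrix (I'' p) (I'' p) ℂ)
    (σO'' : ∀ p, ιO'' p → Matrix (O'' p) (O'' p) ℂ)
    (σI''' : ∀ p, ιI''' p → Matrix (I''' p) (I''' p) ℂ)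
    (σO''' : ∀ p, ιO''' p → Matrix (O''' p) (O''' p) ℂ)
    (hσI' : ∀ p, IsHSBasis (σI' p)) (hσO' : ∀ p, IsHSBasis (σO' p))
    (hσI'' : ∀ p, IsHSBasis (σI'' p)) (hσO'' : ∀ p, IsHSBasis (σO'' p))
    (hσI''' : ∀ p, IsHSBasis (σI''' p)) (hσO''' : ∀ p, IsHSBasis (σO''' p))
    (W : Matrix ((p : P) → I' p × O' p) ((p : P) → I' p × O' p) ℂ)
    (Z : Matrix ((p : P) → I'' p × O'' p) ((p : P) → I'' p × O'' p) ℂ)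
    (V : Matrix ((p : P) → I''' p × O''' p) ((p : P) → I''' p × O''' p) ℂ)
    (w : (∀ p, ιI' p × ιO' p) → ℝ) (z : (∀ p, ιI'' p × ιO'' p) → ℝ)
    (v : (∀ p, ιI''' p × ιO''' p) → ℝ)
    (hW : IsProcessWith σI' σO' W w) (hZ : IsProcessWith σI'' σO'' Z z)
    (hV : IsProcessWith σI''' σO''' V v)
    (hP : ¬ IsProcess (fun p => prodBasis (σI' p) (σI'' p))
        (fun p => prodBasis (σO' p) (σO'' p)) (prodOp W Z)) :
    (∃ u : ∀ p, (ιI' p × ιI'' p) × (ιO' p × ιO'' p),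
        prodCoeffs w z u ≠ 0 ∧ NontrivialTerm u ∧ (∀ p, ¬ InTypeAt u p) ∧
        prodCoeffs (prodCoeffs w z) v
            (combineTerm u (fun q : P => ((0 : ιI''' q), (0 : ιO''' q)))) ≠ 0 ∧
        NontrivialTerm (combineTerm u (fun q : P => ((0 : ιI''' q), (0 : ιO''' q)))) ∧
        (∀ p, ¬ InTypeAt (combineTerm u (fun q : P => ((0 : ιI''' q), (0 : ιO''' q)))) p)) ∧
    ¬ IsProcess (fun p => prodBasis (prodBasis (σI' p) (σI'' p)) (σI''' p))
        (fun p => prodBasis (prodBasis (σO' p) (σO'' p)) (σO''' p))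
        (prodOp (prodOp W Z) V) ∧
    ¬ IsProcess (fun p => prodBasis (σI''' p) (prodBasis (σI' p) (σI'' p)))
        (fun p => prodBasis (σO''' p) (prodBasis (σO' p) (σO'' p)))
        (prodOp V (prodOp W Z)) := by
  have hbad : ¬ OGCoeffs (prodCoeffs w z) := fun hOG => hP ⟨_, hW.prodOp hZ hOG⟩
  obtain ⟨u, hu, hunt, huty⟩ :
      ∃ u, prodCoeffs w z u ≠ 0 ∧ NontrivialTerm u ∧ ∀ p, ¬ InTypeAt u p := by
    simpa [OGCoeffs] using hbad
  have hv0 : v 0 ≠ 0 := hV.coeff_zero_ne_zero hσI''' hσO'''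
  have hI p := (hσI' p).isTraceOrthogonal.prodBasis (hσI'' p).isTraceOrthogonal
  have hO p := (hσO' p).isTraceOrthogonal.prodBasis (hσO'' p).isTraceOrthogonal
  rw [hW.2.2.1, hZ.2.2.1, hV.2.2.1, prodOp_expand, prodOp_expand, prodOp_expand]
  refine ⟨⟨u, hu, hunt, huty, mul_ne_zero hu hv0, hunt.combineTerm_left 0,
    fun p => inTypeAt_combineTerm_zero_right.not.mpr (huty p)⟩, ?_, ?_⟩
  · exact not_isProcess_expand (fun p => (hI p).prodBasis (hσI''' p).isTraceOrthogonal)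
      (fun p => (hO p).prodBasis (hσO''' p).isTraceOrthogonal)
      (mt (OGCoeffs.of_prodCoeffs_right hv0) hbad)
  · exact not_isProcess_expand (fun p => (hσI''' p).isTraceOrthogonal.prodBasis (hI p))
      (fun p => (hσO''' p).isTraceOrthogonal.prodBasis (hO p))
      (mt (OGCoeffs.of_prodCoeffs_left hv0) hbad)

end Statement12

end ProcessPaper
end
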